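/- arXiv:1706.08740 — 3 statements merged into one kernel-verified Lean document; each statement's English description precedes it below -/
import Mathlib

section
/- If N is odd, then for every integer k with |k| ≤ ⌊N/2⌋, one has S(⌊N/2⌋ - k) · S(⌊N/2⌋ + k) = N. -/
open Real Finset

/-- `S N k = ∏_{j=1}^{k} (2 sin(ω j / 2))` with `ω = 2π/N` (so `ω j / 2 = π j / N`),
extended to integer arguments (equal to `1` for `k ≤ 0`). -/
noncomputable def S (N : ℕ) (k : ℤ) : ℝ := ∏ j ∈ Finset.Icc 1 k.toNat, (2 * Real.sin (π * j / N))

/-!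
The reflection `j ↦ N - j` fixes the factors `2 sin (π j / N)`, so when `a + b + 1 = N` the
product `S N a * S N b` is the full product `∏_{j=1}^{N-1} 2 sin (π j / N)`. That product is the
norm of `∏_{j=1}^{N-1} (1 - ζ^j) = N` for `ζ = exp (2π i / N)`, because
`|1 - e^{iθ}| = 2 |sin (θ / 2)|`. For odd `N`, `⌊N/2⌋ - k` and `⌊N/2⌋ + k` do add up to `N - 1`.
-/

theorem Complex.norm_one_sub_exp_ofReal_mul_I (θ : ℝ) :
    ‖1 - Complex.exp (θ * Complex.I)‖ = 2 * |Real.sin (θ / 2)| := by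
  have hre_im : (1 : ℂ) - Complex.exp (θ * Complex.I)
      = ((1 - Real.cos θ : ℝ) : ℂ) + ((-Real.sin θ : ℝ) : ℂ) * Complex.I := by
    rw [Complex.exp_mul_I, ← Complex.ofReal_cos, ← Complex.ofReal_sin]
    push_cast; ring
  have hsq : (1 - Real.cos θ) ^ 2 + (-Real.sin θ) ^ 2 = (2 * |Real.sin (θ / 2)|) ^ 2 := by
    rw [mul_pow, sq_abs, Real.sin_sq_eq_half_sub, mul_div_cancel₀ θ two_ne_zero]
    linear_combination Real.sin_sq_add_cos_sq θ
  rw [hre_im, Complex.norm_add_mul_I, hsq, Real.sqrt_sq (by positivity)]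

theorem Finset.prod_Icc_mul_prod_Icc_of_reflect {M : Type*} [CommMonoid M] (f : ℕ → M)
    {a b : ℕ} (hf : ∀ j ∈ Icc 1 a, f (a + b + 1 - j) = f j) :
    (∏ j ∈ Icc 1 a, f j) * ∏ j ∈ Icc 1 b, f j = ∏ j ∈ Icc 1 (a + b), f j := by
  have hreflect : ∏ j ∈ Icc 1 a, f j = ∏ j ∈ Ioc b (a + b), f j := by
    refine prod_nbij' (fun j => a + b + 1 - j) (fun j => a + b + 1 - j) ?_ ?_ ?_ ?_
      fun j hj => (hf j hj).symm
    all_goals intro j hj; simp only [mem_Icc, mem_Ioc] at hj ⊢; omega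
  rw [hreflect, mul_comm, ← zero_add 1, Icc_add_one_left_eq_Ioc, Icc_add_one_left_eq_Ioc]
  exact prod_Ioc_consecutive f b.zero_le (b.le_add_left a)

theorem Complex.norm_one_sub_exp_two_pi_I_div_pow {N j : ℕ} (hj : j ≤ N) :
    ‖1 - Complex.exp (2 * π * Complex.I / N) ^ j‖ = 2 * Real.sin (π * j / N) := by
  have harg : Complex.exp (2 * π * Complex.I / N) ^ j
      = Complex.exp ((2 * π * j / N : ℝ) * Complex.I) := by
    rw [← Complex.exp_nat_mul]; push_cast; ring_nf
  have hhalf : 2 * π * j / N / 2 = π * j / N := by ring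
  rw [harg, norm_one_sub_exp_ofReal_mul_I, hhalf, abs_of_nonneg]
  rcases N.eq_zero_or_pos with rfl | hN
  · simp
  refine Real.sin_nonneg_of_nonneg_of_le_pi (by positivity) ?_
  rw [div_le_iff₀ (by positivity)]
  gcongr

theorem prod_two_sin_pi_mul_div_eq {N : ℕ} (hN : N ≠ 0) :
    ∏ j ∈ Icc 1 (N - 1), 2 * Real.sin (π * j / N) = N := by
  obtain ⟨n, rfl⟩ := Nat.exists_eq_add_one_of_ne_zero hN
  have hroots := congrArg norm (Complex.isPrimitiveRoot_exp (n + 1) hN).prod_one_sub_pow_eq_order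
  rw [norm_prod, prod_congr rfl fun j hj => Complex.norm_one_sub_exp_two_pi_I_div_pow
    (Nat.succ_le_succ (mem_range.mp hj).le)] at hroots
  rw [add_tsub_cancel_right, ← Ico_add_one_right_eq_Icc, prod_Ico_eq_prod_range,
    add_tsub_cancel_right]
  simp_rw [add_comm 1]
  rw [hroots, ← Nat.cast_succ, Complex.norm_natCast]

theorem Real.sin_pi_mul_natCast_sub_div {N j : ℕ} (hj : j ≤ N) :
    Real.sin (π * (N - j : ℕ) / N) = Real.sin (π * j / N) := by
  rcases N.eq_zero_or_pos with rfl | hN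
  · rw [Nat.le_zero.mp hj]
  have hreflect : π * (N - j : ℕ) / N = π - π * j / N := by
    push_cast [Nat.cast_sub hj]; field_simp
  rw [hreflect, Real.sin_pi_sub]

theorem S_natCast_mul_S_natCast {N a b : ℕ} (hab : a + b + 1 = N) : S N a * S N b = N := by
  subst hab
  simp only [S, Int.toNat_natCast]
  rw [prod_Icc_mul_prod_Icc_of_reflect]
  · exact prod_two_sin_pi_mul_div_eq (a + b).succ_ne_zero
  · intro j hj
    rw [Real.sin_pi_mul_natCast_sub_div (by simp only [mem_Icc] at hj; omega)]

theorem stmt_2_general (N : ℕ) (hodd : Odd N) (k : ℤ) (hk : |k| ≤ (N : ℤ) / 2) :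
    S N ((N : ℤ) / 2 - k) * S N ((N : ℤ) / 2 + k) = N := by
  obtain ⟨hk₁, hk₂⟩ := abs_le.mp hk
  obtain ⟨m, rfl⟩ := hodd
  have hhalf : ((2 * m + 1 : ℕ) : ℤ) / 2 = m := by omega
  rw [hhalf]
  lift (m : ℤ) - k to ℕ using (by omega) with a ha
  lift (m : ℤ) + k to ℕ using (by omega) with b hb
  exact S_natCast_mul_S_natCast (by omega)

theorem stmt_2 (N : ℕ) (hN : 3 ≤ N) (hodd : Odd N) (k : ℤ) (hk : |k| ≤ (N : ℤ) / 2) :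
    S N ((N : ℤ) / 2 - k) * S N ((N : ℤ) / 2 + k) = N :=
  stmt_2_general N hodd k hk
end

section
/- If N is even, then for every integer k with |k| ≤ ⌊N/2⌋, one has S(⌊N/2⌋ - k) · S(⌊N/2⌋ + k) = 2N cos(ω k / 2). -/
/-!
With `μ = exp (2πi/N)`, the identity `∏_{0<j<N} (1 - μ^j) = N` (evaluate `(X^N - 1)/(X - 1)` at `1`)
and `|1 - exp (iθ)| = 2 |sin (θ/2)|` give `∏_{0<j<N} 2 sin (πj/N) = N`. Writing `N = 2m`, the
reflection `j ↦ N - j` turns `S(m - k)` into the product over `m + k ≤ j < N`, so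
`S(m - k) S(m + k) = N · 2 sin (π(m + k)/N) = 2N cos (πk/N)`.
-/

open Real Finset

theorem prod_Ico_two_sin_pi_mul_div {N : ℕ} (hN : 0 < N) :
    ∏ j ∈ Ico 1 N, 2 * sin (π * j / N) = N := by
  obtain ⟨n, rfl⟩ := Nat.exists_eq_add_one_of_ne_zero hN.ne'
  have hμ := Complex.isPrimitiveRoot_exp (n + 1) n.succ_ne_zero
  have hnorm := congrArg (‖·‖) hμ.prod_one_sub_pow_eq_order
  simp only [Complex.norm_prod] at hnorm
  rw [prod_Ico_eq_prod_range, Nat.add_sub_cancel]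
  convert hnorm using 1
  · refine prod_congr rfl fun k hk ↦ ?_
    have hkn : (k : ℝ) + 1 ≤ n + 1 := by exact_mod_cast Nat.succ_le_succ (mem_range.mp hk).le
    rw [← Complex.exp_nat_mul,
      show ((k + 1 : ℕ) : ℂ) * (2 * π * Complex.I / (n + 1 : ℕ)) =
        ((2 * π * (k + 1) / (n + 1) : ℝ) : ℂ) * Complex.I by push_cast; field_simp,
      Complex.norm_one_sub_exp_ofReal_mul_I,
      show 2 * π * (k + 1) / (n + 1) / 2 = π * (1 + k : ℕ) / (n + 1 : ℕ) by push_cast; ring,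
      abs_of_nonneg]
    apply sin_nonneg_of_nonneg_of_le_pi (by positivity)
    rw [div_le_iff₀ (by positivity)]
    push_cast
    nlinarith [pi_pos]
  · rw [show ((n : ℂ) + 1) = ((n + 1 : ℕ) : ℂ) by push_cast; ring, Complex.norm_natCast]

theorem prod_Icc_two_sin_pi_mul_div_eq_prod_Ico {N n : ℕ} (hn : n ≤ N) :
    ∏ j ∈ Icc 1 n, 2 * sin (π * j / N) = ∏ j ∈ Ico (N - n) N, 2 * sin (π * j / N) := by
  refine prod_nbij' (fun j ↦ N - j) (fun j ↦ N - j) (fun j hj ↦ ?_) (fun j hj ↦ ?_)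
    (fun j hj ↦ ?_) (fun j hj ↦ ?_) (fun j hj ↦ ?_) <;>
    simp only [mem_Icc, mem_Ico] at hj ⊢
  any_goals omega
  have hN : (N : ℝ) ≠ 0 := by norm_cast; omega
  rw [Nat.cast_sub (by omega), mul_sub, sub_div, mul_div_cancel_right₀ _ hN, sin_pi_sub]

theorem sin_pi_mul_add_div_of_eq_two_mul {N m : ℕ} (hN : N = 2 * m) (hm : 0 < m) (x : ℝ) :
    sin (π * (m + x) / N) = cos (π * x / N) := by
  have hm' : (m : ℝ) ≠ 0 := by positivity
  rw [hN, ← sin_add_pi_div_two]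
  push_cast
  congr 1
  field_simp
  ring

theorem prod_Icc_two_sin_sub_mul_prod_Icc_two_sin_add {N m a : ℕ} (hN : N = 2 * m) (hm : 0 < m)
    (ha : a ≤ m) :
    (∏ j ∈ Icc 1 (m - a), 2 * sin (π * j / N)) * ∏ j ∈ Icc 1 (m + a), 2 * sin (π * j / N) =
      2 * N * cos (π * a / N) := by
  rw [prod_Icc_two_sin_pi_mul_div_eq_prod_Ico (by omega), show N - (m - a) = m + a by omega,
    ← Ico_add_one_right_eq_Icc, prod_Ico_succ_top (by omega), mul_left_comm, ← mul_assoc,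
    prod_Ico_consecutive _ (by omega) (by omega), prod_Ico_two_sin_pi_mul_div (by omega),
    Nat.cast_add, sin_pi_mul_add_div_of_eq_two_mul hN hm]
  ring

theorem stmt_3 (N : ℕ) (hN : 2 ≤ N) (heven : Even N) (k : ℤ) (hk : |k| ≤ (N : ℤ) / 2) :
    S N ((N : ℤ) / 2 - k) * S N ((N : ℤ) / 2 + k)
      = 2 * N * Real.cos (2 * π / N * k / 2) := by
  wlog hk0 : 0 ≤ k generalizing k
  · have h := this (-k) (by rwa [abs_neg]) (by omega)
    rw [sub_neg_eq_add, ← sub_eq_add_neg, mul_comm] at h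
    rw [h, Int.cast_neg, mul_neg, neg_div, cos_neg]
  obtain ⟨m, rfl⟩ := heven
  lift k to ℕ using hk0
  have hkm : k ≤ m := by have := (abs_le.mp hk).2; omega
  have hhalf : ((m + m : ℕ) : ℤ) / 2 = m := by omega
  rw [hhalf, S, S, show ((m : ℤ) - k).toNat = m - k by omega,
    show ((m : ℤ) + k).toNat = m + k by omega,
    prod_Icc_two_sin_sub_mul_prod_Icc_two_sin_add (two_mul m).symm (by omega) hkm]
  congr 2
  push_cast
  ring
end

section
/- If N is even, then for every integer k with |k| < ⌈N/2⌉ (so that |k| ≤ N/2 - 1), one has S(⌈N/2⌉ - 1 - k) · S(⌈N/2⌉ - 1 + k) = N / (2 cos(ω k / 2)). -/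
/-!
Let `ζ = exp(2πi/N)`. The chord `|1 - ζ^j|` equals `2 sin(πj/N)`, so evaluating
`∏_{j=1}^{N-1} (1 - ζ^j) = N` in absolute value gives `S(N-1) = N`. The substitution `j ↦ N - j`
turns the tail of this product beyond `b` into `S(N-1-b)`, whence `S(b) S(N-1-b) = N`.
For `N = 2M` and `b = M-1+k`, the factor `S(M-k)` is `S(M-1-k)` times the chord
`2 sin(π(M-k)/N) = 2 cos(πk/N)`.
-/

open Real Finset

noncomputable def chord (N j : ℕ) : ℝ := 2 * sin (π * j / N)

lemma S_natCast (N n : ℕ) : S N n = ∏ j ∈ Ico 1 (n + 1), chord N j := by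
  rw [S, Int.toNat_natCast, Ico_add_one_right_eq_Icc]
  rfl

lemma S_natCast_succ (N n : ℕ) : S N (n + 1 : ℕ) = S N n * chord N (n + 1) := by
  rw [S_natCast, S_natCast, prod_Ico_succ_top (by omega)]

lemma norm_one_sub_exp_pow {N j : ℕ} (hj : j ≤ N) :
    ‖1 - Complex.exp (2 * π * Complex.I / N) ^ j‖ = chord N j := by
  have hθ : π * j / N ≤ π := div_le_of_le_mul₀ (by positivity) pi_pos.le (by gcongr)
  rw [← Complex.exp_nat_mul, norm_sub_rev,
    show (j : ℂ) * (2 * π * Complex.I / N) = Complex.I * ((2 * π * j / N : ℝ) : ℂ) by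
      push_cast; ring,
    Complex.norm_exp_I_mul_ofReal_sub_one, show 2 * π * j / N / 2 = π * j / N by ring,
    Real.norm_eq_abs, abs_of_nonneg (mul_nonneg zero_le_two
      (sin_nonneg_of_nonneg_of_le_pi (by positivity) hθ)), chord]

theorem prod_chord {N : ℕ} (hN : N ≠ 0) : ∏ j ∈ Ico 1 N, chord N j = N := by
  obtain ⟨n, rfl⟩ : ∃ n, N = n + 1 := ⟨N - 1, by omega⟩
  have hprod := congrArg norm (Complex.isPrimitiveRoot_exp (n + 1) hN).prod_one_sub_pow_eq_order
  rw [norm_prod] at hprod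
  rw [prod_Ico_eq_prod_range, Nat.add_sub_cancel]
  calc ∏ k ∈ range n, chord (n + 1) (1 + k)
      = ∏ k ∈ range n, ‖1 - Complex.exp (2 * π * Complex.I / (n + 1 : ℕ)) ^ (k + 1)‖ :=
        prod_congr rfl fun k hk => by
          rw [add_comm 1 k, norm_one_sub_exp_pow (by rw [mem_range] at hk; omega)]
    _ = ‖(n : ℂ) + 1‖ := hprod
    _ = (n + 1 : ℕ) := by rw [← Nat.cast_add_one, Complex.norm_natCast]

lemma chord_sub {N j : ℕ} (hj : j ≤ N) : chord N (N - j) = chord N j := by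
  rcases eq_or_ne N 0 with rfl | hN
  · simp [chord]
  rw [chord, chord, Nat.cast_sub hj, mul_sub, sub_div, mul_div_cancel_right₀ _ (by positivity),
    sin_pi_sub]

lemma S_mul_S_sub_one_sub {N b : ℕ} (hb : b < N) : S N b * S N (N - 1 - b : ℕ) = N := by
  have hreflect :
      ∏ j ∈ Ico (b + 1) N, chord N (N - j) = ∏ j ∈ Ico 1 (N - 1 - b + 1), chord N j := by
    rw [prod_Ico_reflect _ _ le_self_add, show N + 1 - N = 1 by omega,
      show N + 1 - (b + 1) = N - 1 - b + 1 by omega]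
  rw [S_natCast, S_natCast, ← hreflect, ← prod_chord (by omega : N ≠ 0),
    ← prod_Ico_consecutive (chord N) (Nat.le_add_left 1 b) hb]
  congr 1
  exact prod_congr rfl fun j hj => chord_sub (mem_Ico.1 hj).2.le

lemma chord_half_sub {N M k : ℕ} (hN : N = 2 * M) (hk : k < M) :
    chord N (M - k) = 2 * cos (π * k / N) := by
  have hM : (M : ℝ) ≠ 0 := Nat.cast_ne_zero.2 (by omega)
  subst hN
  rw [chord, Nat.cast_sub hk.le, ← sin_pi_div_two_sub]
  congr 2
  push_cast
  field_simp

theorem S_mul_S_of_eq_two_mul {N M k : ℕ} (hN : N = 2 * M) (hk : k < M) :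
    S N ((M : ℤ) - 1 - k) * S N ((M : ℤ) - 1 + k) = N / (2 * cos (π * k / N)) := by
  have hcos : 0 < cos (π * k / N) := by
    apply cos_pos_of_mem_Ioo
    constructor
    · have : 0 ≤ π * k / N := by positivity
      linarith [pi_pos]
    · have hk' : (k : ℝ) + 1 ≤ M := by exact_mod_cast hk
      have hN' : (N : ℝ) = 2 * M := by exact_mod_cast hN
      rw [div_lt_iff₀ (by rw [hN']; linarith)]
      nlinarith [pi_pos]
  rw [eq_div_iff (by positivity), ← chord_half_sub hN hk,
    show (M : ℤ) - 1 - k = (M - 1 - k : ℕ) by omega, show (M : ℤ) - 1 + k = (M - 1 + k : ℕ) by omega]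
  calc S N (M - 1 - k : ℕ) * S N (M - 1 + k : ℕ) * chord N (M - k)
      = S N (M - 1 + k : ℕ) * S N (N - 1 - (M - 1 + k) : ℕ) := by
        rw [show N - 1 - (M - 1 + k) = M - 1 - k + 1 by omega, S_natCast_succ,
          show M - 1 - k + 1 = M - k by omega]
        ring
    _ = N := S_mul_S_sub_one_sub (by omega)

lemma S_sub_mul_S_add_abs (N : ℕ) (a k : ℤ) :
    S N (a - k) * S N (a + k) = S N (a - |k|) * S N (a + |k|) := by
  rcases abs_choice k with h | h <;> rw [h]
  rw [sub_neg_eq_add, ← sub_eq_add_neg, mul_comm]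

theorem stmt_4_general (N : ℕ) (heven : Even N) (k : ℤ)
    (hk : |k| < ((N : ℤ) + 1) / 2) :
    S N (((N : ℤ) + 1) / 2 - 1 - k) * S N (((N : ℤ) + 1) / 2 - 1 + k)
      = N / (2 * Real.cos (2 * π / N * k / 2)) := by
  obtain ⟨M, hM⟩ := heven
  have hhalf : ((N : ℤ) + 1) / 2 = M := by omega
  rw [hhalf] at hk ⊢
  rw [Int.abs_eq_natAbs] at hk
  rw [S_sub_mul_S_add_abs, Int.abs_eq_natAbs, S_mul_S_of_eq_two_mul (by omega) (by omega),
    ← cos_abs (2 * π / N * k / 2), Nat.cast_natAbs, Int.cast_abs,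
    show 2 * π / N * k / 2 = π / N * k by ring, abs_mul, abs_of_nonneg (by positivity : 0 ≤ π / N)]
  ring_nf

theorem stmt_4 (N : ℕ) (hN : 2 ≤ N) (heven : Even N) (k : ℤ)
    (hk : |k| < ((N : ℤ) + 1) / 2) :
    S N (((N : ℤ) + 1) / 2 - 1 - k) * S N (((N : ℤ) + 1) / 2 - 1 + k)
      = N / (2 * Real.cos (2 * π / N * k / 2)) :=
  stmt_4_general N heven k hk
end
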